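/- Let m ≥ 2 be odd and let w be the chain pomset weight on (ZMod m)^n. For the code C = {v : v_i = 0 for i ≤ n-k} (with 1 ≤ k ≤ n), the minimum weight of a nonzero codeword is (n-k)⌊m/2⌋ + 1. -/

import Mathlib

/-- The Lee weight on `ZMod m`. -/
def leeWeight (m : ℕ) (x : ZMod m) : ℕ := min x.val (m - x.val)

/-- The chain (NRT-type) pomset weight on `(ZMod m)^n`: the Lee weight of the
top nonzero coordinate plus `⌊m/2⌋` for each coordinate below it. -/
noncomputable def chainWeight (m n : ℕ) (v : Fin n → ZMod m) : ℕ :=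
  if h : v = 0 then 0
  else
    let t : Fin n := (Finset.univ.filter fun i => v i ≠ 0).max' (by
      rw [Finset.filter_nonempty_iff]
      obtain ⟨i, hi⟩ := Function.ne_iff.mp h
      exact ⟨i, Finset.mem_univ i, by simpa using hi⟩)
    leeWeight m (v t) + t.val * (m / 2)

lemma leeWeight_pos {m : ℕ} [NeZero m] {x : ZMod m} (hx : x ≠ 0) : 0 < leeWeight m x := by
  have hval : 0 < x.val := Nat.pos_of_ne_zero ((ZMod.val_ne_zero x).2 hx)
  have := ZMod.val_lt x
  simp only [leeWeight, lt_min_iff]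
  omega

lemma leeWeight_one {m : ℕ} (hm : 2 ≤ m) : leeWeight m 1 = 1 := by
  have : Fact (1 < m) := ⟨hm⟩
  simp only [leeWeight, ZMod.val_one]
  omega

lemma exists_top_ne_zero {ι M : Type*} [LinearOrder ι] [Fintype ι] [Zero M] {v : ι → M} (hv : v ≠ 0) :
    ∃ t, v t ≠ 0 ∧ ∀ i, t < i → v i = 0 := by
  classical
  have hsupp : (Finset.univ.filter fun i => v i ≠ 0).Nonempty := by
    obtain ⟨i, hi⟩ := Function.ne_iff.mp hv
    exact ⟨i, Finset.mem_filter.2 ⟨Finset.mem_univ i, hi⟩⟩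
  refine ⟨_, (Finset.mem_filter.1 (Finset.max'_mem _ hsupp)).2, fun i hi => ?_⟩
  by_contra hvi
  exact (Finset.le_max' _ i (Finset.mem_filter.2 ⟨Finset.mem_univ i, hvi⟩)).not_gt hi

lemma chainWeight_eq_of_top {m n : ℕ} {v : Fin n → ZMod m} {t : Fin n} (ht : v t ≠ 0)
    (htop : ∀ i, t < i → v i = 0) :
    chainWeight m n v = leeWeight m (v t) + t * (m / 2) := by
  have hv : v ≠ 0 := fun h => ht (congrFun h t)
  rw [chainWeight, dif_neg hv]
  have hmax : (Finset.univ.filter fun i => v i ≠ 0).max' ?_ = t :=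
    (Finset.max'_eq_iff _ _ _).2 ⟨Finset.mem_filter.2 ⟨Finset.mem_univ t, ht⟩,
      fun i hi => not_lt.1 fun hti => (Finset.mem_filter.1 hi).2 (htop i hti)⟩
  · simp only [hmax]
  · exact ⟨t, Finset.mem_filter.2 ⟨Finset.mem_univ t, ht⟩⟩

theorem chain_code_min_weight_general (m n k : ℕ) (hm : 2 ≤ m)
    (hk1 : 1 ≤ k) (hkn : k ≤ n) :
    letI C : Set (Fin n → ZMod m) := {v | ∀ i : Fin n, (i : ℕ) < n - k → v i = 0}
    (∀ v ∈ C, v ≠ 0 → (n - k) * (m / 2) + 1 ≤ chainWeight m n v) ∧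
      (∃ v ∈ C, v ≠ 0 ∧ chainWeight m n v = (n - k) * (m / 2) + 1) := by
  have : NeZero m := ⟨by omega⟩
  have : Fact (1 < m) := ⟨hm⟩
  refine ⟨fun v hvC hv => ?_, ?_⟩
  · obtain ⟨t, ht, htop⟩ := exists_top_ne_zero hv
    have hkt : n - k ≤ t := not_lt.1 fun h => ht (hvC t h)
    rw [chainWeight_eq_of_top ht htop]
    have hlee := leeWeight_pos ht
    have hmul := Nat.mul_le_mul_right (m / 2) hkt
    omega
  · let t₀ : Fin n := ⟨n - k, by omega⟩
    have hsingle : (Pi.single t₀ 1 : Fin n → ZMod m) t₀ ≠ 0 := by simp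
    refine ⟨Pi.single t₀ 1, fun i hi => Pi.single_eq_of_ne (Fin.ne_of_val_ne hi.ne) _,
      fun h => hsingle (congrFun h t₀), ?_⟩
    rw [chainWeight_eq_of_top hsingle fun i hi => Pi.single_eq_of_ne hi.ne' _,
      Pi.single_eq_same, leeWeight_one hm]
    simp only [t₀]
    omega

theorem chain_code_min_weight (m n k : ℕ) (hm : 2 ≤ m) (hmodd : Odd m)
    (hk1 : 1 ≤ k) (hkn : k ≤ n) :
    letI C : Set (Fin n → ZMod m) := {v | ∀ i : Fin n, (i : ℕ) < n - k → v i = 0}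
    (∀ v ∈ C, v ≠ 0 → (n - k) * (m / 2) + 1 ≤ chainWeight m n v) ∧
      (∃ v ∈ C, v ≠ 0 ∧ chainWeight m n v = (n - k) * (m / 2) + 1) :=
  chain_code_min_weight_general m n k hm hk1 hkn
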